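/- arXiv:2209.09419 — 2 statements merged into one kernel-verified Lean document; each statement's English description precedes it below -/
import Mathlib

section
/- (Optimal Termination) Let s_{0:T} be an admissible path achieving the optimal value V(s_0, T). Then there exists an index k ∈ [0, T] such that μ_{s_t} = μ_{s_k} for all t with k ≤ t ≤ T, and μ_{s_k} ≥ μ_{s_t} for all t ∈ [0, T]. -/
open Finset
open scoped ENNReal

/-- A path `p` is admissible up to time `T` if consecutive nodes are adjacent. -/
def Adm {S : Type*} (adj : S → S → Prop) (p : ℕ → S) (T : ℕ) : Prop :=
  ∀ t < T, adj (p t) (p (t + 1))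

/-- Cumulative expected reward of the path `p 0, p 1, ..., p T`. -/
noncomputable def Vpath {S : Type*} (μ : S → ℝ) (p : ℕ → S) (T : ℕ) : ℝ :=
  ∑ t ∈ Finset.range (T + 1), μ (p t)

/-- Optimal `T`-step cumulative expected reward starting from node `s`. -/
noncomputable def Vopt {S : Type*} (adj : S → S → Prop) (μ : S → ℝ) (s : S) (T : ℕ) : ℝ :=
  sSup {v | ∃ p : ℕ → S, p 0 = s ∧ Adm adj p T ∧ Vpath μ p T = v}

/-- Infinite-horizon undiscounted regret (total cost) of a stationary policy `π`
starting from node `s`, as a limit (`tsum` of the nonnegative costs). -/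
noncomputable def Rinf {S : Type*} (μ : S → ℝ) (μstar : ℝ) (π : S → S) (s : S) : ℝ≥0∞ :=
  ∑' t : ℕ, ENNReal.ofReal (μstar - μ (π^[t] s))

/-- The sufficient planning horizon `T_G = ⌈D μ* / Δ⌉`. -/
noncomputable def TG (D : ℕ) (μstar Δ : ℝ) : ℕ :=
  Nat.ceil ((D : ℝ) * μstar / Δ)

/-!
Let `m` be a time at which the path attains its best mean reward. Freezing the path at `p m`
from time `m` on is still admissible (self-loops) and gains reward pointwise, so by optimality
of `p` the two paths have the same value; a pointwise inequality between sums with equal totals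
is an equality, hence `μ (p t) = μ (p m)` for all `t ≥ m`.
-/

section GraphBandit

variable {S : Type*} {adj : S → S → Prop} {μ : S → ℝ} {p : ℕ → S} {T : ℕ}

theorem Adm.comp_min (hrefl : ∀ s, adj s s) (hadm : Adm adj p T) (m : ℕ) :
    Adm adj (fun t => p (min t m)) T := by
  intro t ht
  show adj (p (min t m)) (p (min (t + 1) m))
  by_cases htm : t < m
  · rw [min_eq_left htm.le, min_eq_left (Nat.succ_le_of_lt htm)]
    exact hadm t ht
  · rw [min_eq_right (not_lt.mp htm), min_eq_right (by omega)]
    exact hrefl _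

theorem bddAbove_Vpath_of_finite [Finite S] (s : S) :
    BddAbove {v | ∃ q : ℕ → S, q 0 = s ∧ Adm adj q T ∧ Vpath μ q T = v} := by
  obtain ⟨C, hC⟩ := (Set.finite_range μ).bddAbove
  refine ⟨(T + 1) * C, ?_⟩
  rintro v ⟨q, -, -, rfl⟩
  calc Vpath μ q T ≤ ∑ _t ∈ range (T + 1), C :=
        sum_le_sum fun t _ => hC (Set.mem_range_self (q t))
    _ = (T + 1) * C := by simp

theorem Vpath_le_Vopt [Finite S] {s : S} (hp0 : p 0 = s) (hadm : Adm adj p T) :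
    Vpath μ p T ≤ Vopt adj μ s T :=
  le_csSup (bddAbove_Vpath_of_finite s) ⟨p, hp0, hadm, rfl⟩

end GraphBandit

theorem optimal_termination_general {S : Type*} [Fintype S]
    (adj : S → S → Prop) (hrefl : ∀ s, adj s s)
    (μ : S → ℝ) (T : ℕ) (s0 : S) (p : ℕ → S)
    (hp0 : p 0 = s0) (hadm : Adm adj p T)
    (hopt : Vpath μ p T = Vopt adj μ s0 T) :
    ∃ k ≤ T, (∀ t, k ≤ t → t ≤ T → μ (p t) = μ (p k)) ∧
      (∀ t ≤ T, μ (p t) ≤ μ (p k)) := by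
  obtain ⟨m, hm, hmax⟩ := exists_max_image (range (T + 1)) (fun t => μ (p t)) nonempty_range_add_one
  have hmT : m ≤ T := Nat.lt_succ_iff.mp (mem_range.mp hm)
  have hgain : ∀ t ∈ range (T + 1), μ (p t) ≤ μ (p (min t m)) := fun t ht => by
    rcases le_total t m with htm | hmt
    · rw [min_eq_left htm]
    · rw [min_eq_right hmt]; exact hmax t ht
  have hfrozen_le : Vpath μ (fun t => p (min t m)) T ≤ Vpath μ p T :=
    hopt ▸ Vpath_le_Vopt (by simpa using hp0) (hadm.comp_min hrefl m)
  have hsame : ∀ t ∈ range (T + 1), μ (p t) = μ (p (min t m)) :=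
    (sum_eq_sum_iff_of_le hgain).mp (le_antisymm (sum_le_sum hgain) hfrozen_le)
  refine ⟨m, hmT, fun t hmt htT => ?_, fun t ht => hmax t (mem_range.mpr (Nat.lt_succ_of_le ht))⟩
  simpa [min_eq_right hmt] using hsame t (mem_range.mpr (Nat.lt_succ_of_le htT))

/-- Optimal Termination: an optimal path ends up spinning in a node whose mean
reward is the highest along the path. -/
theorem optimal_termination {S : Type*} [Fintype S] [Nonempty S]
    (adj : S → S → Prop) (hrefl : ∀ s, adj s s) (hsymm : ∀ s t, adj s t → adj t s)
    (μ : S → ℝ) (T : ℕ) (s0 : S) (p : ℕ → S)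
    (hp0 : p 0 = s0) (hadm : Adm adj p T)
    (hopt : Vpath μ p T = Vopt adj μ s0 T) :
    ∃ k ≤ T, (∀ t, k ≤ t → t ≤ T → μ (p t) = μ (p k)) ∧
      (∀ t ≤ T, μ (p t) ≤ μ (p k)) :=
  optimal_termination_general adj hrefl μ T s0 p hp0 hadm hopt
end

section
/- (Greedy stationary policy optimality) Let T_G = ⌈Dμ*/Δ⌉ and define π_G(s) ∈ argmax_{w ∈ N_s} V(w, T_G + |S|). Then for any T ≥ T_G + |S| and any start node s_0, every path s_{0:T} generated by s_t ∈ π_G(s_{t-1}) achieves the optimal value V(s_0, T). -/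
open Finset
open scoped ENNReal

/-!
Measure a path by its regret `∑ (μ* - μ (p t))`, so that maximizing value means minimizing
regret, and let `h s = optRegret s H` be the least regret of a path from `s` over the horizon
`H = T_G + |S|`.

Turnpike property: every path from `s` of length at least `T_G` has regret at least `h s`.
Either it meets an optimal node within `T_G` steps, and stopping there gives an `H`-path of no
larger regret, or it pays at least `Δ` at each of its first `T_G + 1` nodes, which exceeds
`D μ* ≥ h s` (walk to an optimal node in at most `D` steps and stay).

Cutting an optimal `H`-path from `s` after its first step, the turnpike property gives the
Bellman inequality `(μ* - μ s) + h w ≤ h s` for some neighbour `w`, hence for the greedy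
successor. Telescoping along the greedy path bounds its regret by `h s₀`, which the turnpike
property bounds by the regret of any path of length `T`.
-/

lemma sum_range_add_le_of_forall_add_le {a b : ℕ → ℝ} {T : ℕ}
    (h : ∀ t < T, a t + b (t + 1) ≤ b t) : ∑ t ∈ range T, a t + b T ≤ b 0 := by
  have hsum : ∑ t ∈ range T, a t ≤ ∑ t ∈ range T, (b t - b (t + 1)) :=
    sum_le_sum fun t ht => by linarith [h t (mem_range.1 ht)]
  rw [sum_range_sub'] at hsum
  linarith

section Regret

variable {S : Type*}

noncomputable def pathRegret (μ : S → ℝ) (μstar : ℝ) (p : ℕ → S) (n : ℕ) : ℝ :=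
  ∑ t ∈ range n, (μstar - μ (p t))

noncomputable def optRegret (adj : S → S → Prop) (μ : S → ℝ) (μstar : ℝ) (s : S) (n : ℕ) : ℝ :=
  (n + 1) * μstar - Vopt adj μ s n

def stopAt (p : ℕ → S) (k : ℕ) : ℕ → S := fun t => p (min t k)

variable {adj : S → S → Prop} {μ : S → ℝ} {μstar : ℝ}

lemma vpath_eq_sub_pathRegret (μ : S → ℝ) (μstar : ℝ) (p : ℕ → S) (T : ℕ) :
    Vpath μ p T = (T + 1) * μstar - pathRegret μ μstar p (T + 1) := by
  simp only [Vpath, pathRegret, sum_sub_distrib, sum_const, card_range, nsmul_eq_mul]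
  push_cast
  ring

lemma pathRegret_monotone (hmax : ∀ s, μ s ≤ μstar) (p : ℕ → S) :
    Monotone (pathRegret μ μstar p) := fun _ _ hmn =>
  sum_le_sum_of_subset_of_nonneg (range_subset_range.2 hmn) fun _ _ _ => sub_nonneg.2 (hmax _)

lemma pathRegret_le_mul (hμ0 : ∀ s, 0 ≤ μ s) (p : ℕ → S) (n : ℕ) :
    pathRegret μ μstar p n ≤ n * μstar := by
  calc pathRegret μ μstar p n ≤ ∑ _t ∈ range n, μstar :=
        sum_le_sum fun t _ => by linarith [hμ0 (p t)]
    _ = n * μstar := by rw [sum_const, card_range, nsmul_eq_mul]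

lemma adm_stopAt (hrefl : ∀ s, adj s s) {p : ℕ → S} {k : ℕ} (hp : Adm adj p k) (T : ℕ) :
    Adm adj (stopAt p k) T := by
  intro t _
  rcases lt_or_ge t k with htk | hkt
  · simpa only [stopAt, min_eq_left htk.le, min_eq_left (Nat.succ_le_of_lt htk)] using hp t htk
  · simpa only [stopAt, min_eq_right hkt, min_eq_right (hkt.trans t.le_succ)] using hrefl (p k)

lemma pathRegret_stopAt {p : ℕ → S} {k : ℕ} (hk : μ (p k) = μstar) (n : ℕ) :
    pathRegret μ μstar (stopAt p k) n = pathRegret μ μstar p (min k n) := by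
  rcases le_total k n with hkn | hnk
  · rw [min_eq_left hkn, pathRegret, ← sum_range_add_sum_Ico _ hkn]
    have hstay : ∑ t ∈ Ico k n, (μstar - μ (stopAt p k t)) = 0 :=
      sum_eq_zero fun t ht => by rw [stopAt, min_eq_right (mem_Ico.1 ht).1, hk, sub_self]
    rw [hstay, add_zero]
    exact sum_congr rfl fun t ht => by rw [stopAt, min_eq_left (mem_range.1 ht).le]
  · rw [min_eq_right hnk]
    exact sum_congr rfl fun t ht => by rw [stopAt, min_eq_left ((mem_range.1 ht).le.trans hnk)]

lemma finite_vpath_set [Finite S] (adj : S → S → Prop) (μ : S → ℝ) (s : S) (T : ℕ) :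
    {v | ∃ p : ℕ → S, p 0 = s ∧ Adm adj p T ∧ Vpath μ p T = v}.Finite := by
  refine (Set.finite_range fun f : Fin (T + 1) → S => ∑ i, μ (f i)).subset ?_
  rintro v ⟨p, -, -, rfl⟩
  exact ⟨fun i => p i, Fin.sum_univ_eq_sum_range (fun t => μ (p t)) (T + 1)⟩

lemma le_vopt [Finite S] {s : S} {T : ℕ} {p : ℕ → S} (hp0 : p 0 = s) (hp : Adm adj p T) :
    Vpath μ p T ≤ Vopt adj μ s T :=
  le_csSup (finite_vpath_set adj μ s T).bddAbove ⟨p, hp0, hp, rfl⟩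

lemma exists_vpath_eq_vopt [Finite S] (hrefl : ∀ s, adj s s) (s : S) (T : ℕ) :
    ∃ p : ℕ → S, p 0 = s ∧ Adm adj p T ∧ Vpath μ p T = Vopt adj μ s T :=
  Set.Nonempty.csSup_mem (s := {v | ∃ p : ℕ → S, p 0 = s ∧ Adm adj p T ∧ Vpath μ p T = v})
    ⟨_, fun _ => s, rfl, fun _ _ => hrefl s, rfl⟩ (finite_vpath_set adj μ s T)

lemma optRegret_le_pathRegret [Finite S] {s : S} {n : ℕ} {p : ℕ → S} (hp0 : p 0 = s)
    (hp : Adm adj p n) : optRegret adj μ μstar s n ≤ pathRegret μ μstar p (n + 1) := by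
  have := le_vopt (μ := μ) hp0 hp
  rw [vpath_eq_sub_pathRegret μ μstar] at this
  rw [optRegret]
  linarith

lemma exists_pathRegret_eq_optRegret [Finite S] (hrefl : ∀ s, adj s s) (s : S) (n : ℕ) :
    ∃ p : ℕ → S, p 0 = s ∧ Adm adj p n ∧
      pathRegret μ μstar p (n + 1) = optRegret adj μ μstar s n := by
  obtain ⟨p, hp0, hp, hpv⟩ := exists_vpath_eq_vopt (μ := μ) hrefl s n
  refine ⟨p, hp0, hp, ?_⟩
  rw [optRegret, ← hpv, vpath_eq_sub_pathRegret μ μstar]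
  ring

lemma sub_le_optRegret [Finite S] (hrefl : ∀ s, adj s s) (hmax : ∀ s, μ s ≤ μstar)
    (s : S) (n : ℕ) : μstar - μ s ≤ optRegret adj μ μstar s n := by
  obtain ⟨p, hp0, -, hpr⟩ := exists_pathRegret_eq_optRegret (μ := μ) (μstar := μstar) hrefl s n
  have := pathRegret_monotone hmax p (Nat.le_add_left 1 n)
  rwa [hpr, pathRegret, sum_range_one, hp0] at this

lemma optRegret_le_of_reach [Finite S] (hrefl : ∀ s, adj s s) {s : S} {p : ℕ → S} {k : ℕ}
    (hp0 : p 0 = s) (hp : Adm adj p k) (hk : μ (p k) = μstar) (n : ℕ) :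
    optRegret adj μ μstar s n ≤ pathRegret μ μstar p (min k (n + 1)) := by
  rw [← pathRegret_stopAt hk]
  exact optRegret_le_pathRegret (by simp [stopAt, hp0]) (adm_stopAt hrefl hp n)

lemma optRegret_le_diam_mul [Finite S] (hrefl : ∀ s, adj s s) (hμ0 : ∀ s, 0 ≤ μ s)
    (hex : ∃ s, μ s = μstar) {D : ℕ}
    (hD : ∀ s s' : S, ∃ (T : ℕ) (p : ℕ → S), T ≤ D ∧ p 0 = s ∧ p T = s' ∧ Adm adj p T)
    (s : S) (n : ℕ) : optRegret adj μ μstar s n ≤ D * μstar := by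
  obtain ⟨s', hs'⟩ := hex
  obtain ⟨k, p, hkD, hp0, hpk, hp⟩ := hD s s'
  have hμstar : 0 ≤ μstar := hs' ▸ hμ0 s'
  calc optRegret adj μ μstar s n ≤ pathRegret μ μstar p (min k (n + 1)) :=
        optRegret_le_of_reach hrefl hp0 hp (by rw [hpk, hs']) n
    _ ≤ (min k (n + 1) : ℕ) * μstar := pathRegret_le_mul hμ0 p _
    _ ≤ D * μstar :=
        mul_le_mul_of_nonneg_right (by exact_mod_cast (min_le_left _ _).trans hkD) hμstar

lemma optRegret_lt_TG_succ_mul [Finite S] (hrefl : ∀ s, adj s s) (hμ0 : ∀ s, 0 ≤ μ s)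
    (hex : ∃ s, μ s = μstar) {Δ : ℝ} (hΔ : 0 < Δ) {D : ℕ}
    (hD : ∀ s s' : S, ∃ (T : ℕ) (p : ℕ → S), T ≤ D ∧ p 0 = s ∧ p T = s' ∧ Adm adj p T)
    (s : S) (n : ℕ) : optRegret adj μ μstar s n < (TG D μstar Δ + 1) * Δ := by
  have hTG : D * μstar ≤ TG D μstar Δ * Δ := (div_le_iff₀ hΔ).1 (Nat.le_ceil _)
  linarith [optRegret_le_diam_mul hrefl hμ0 hex hD s n]

lemma optRegret_le_pathRegret_of_le [Finite S] (hrefl : ∀ s, adj s s)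
    (hmax : ∀ s, μ s ≤ μstar) {Δ : ℝ} (hgap : ∀ s, μ s < μstar → μ s ≤ μstar - Δ)
    {G n : ℕ} {s : S} (hB : optRegret adj μ μstar s n < (G + 1) * Δ)
    {m : ℕ} (hGm : G ≤ m) {p : ℕ → S} (hp0 : p 0 = s) (hp : Adm adj p m) :
    optRegret adj μ μstar s n ≤ pathRegret μ μstar p (m + 1) := by
  by_cases hvisit : ∃ k ≤ G, μ (p k) = μstar
  · obtain ⟨k, hkG, hk⟩ := hvisit
    calc optRegret adj μ μstar s n ≤ pathRegret μ μstar p (min k (n + 1)) :=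
          optRegret_le_of_reach hrefl hp0 (fun t ht => hp t (by omega)) hk n
      _ ≤ pathRegret μ μstar p (m + 1) := pathRegret_monotone hmax p (by omega)
  · push Not at hvisit
    have hpay : (G + 1) * Δ ≤ pathRegret μ μstar p (G + 1) := by
      calc ((G : ℝ) + 1) * Δ = ∑ _t ∈ range (G + 1), Δ := by
            rw [sum_const, card_range, nsmul_eq_mul]; push_cast; ring
        _ ≤ pathRegret μ μstar p (G + 1) := sum_le_sum fun t ht => by
            have hlt := (hmax (p t)).lt_of_ne (hvisit t (Nat.lt_succ_iff.1 (mem_range.1 ht)))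
            linarith [hgap _ hlt]
    linarith [pathRegret_monotone hmax p (Nat.succ_le_succ hGm)]

lemma exists_adj_add_optRegret_le [Finite S] (hrefl : ∀ s, adj s s)
    (hmax : ∀ s, μ s ≤ μstar) {Δ : ℝ} (hgap : ∀ s, μ s < μstar → μ s ≤ μstar - Δ)
    {G n : ℕ} (hB : ∀ w, optRegret adj μ μstar w n < (G + 1) * Δ) (hGn : G < n) (s : S) :
    ∃ w, adj s w ∧ μstar - μ s + optRegret adj μ μstar w n ≤ optRegret adj μ μstar s n := by
  obtain ⟨q, hq0, hq, hqr⟩ := exists_pathRegret_eq_optRegret (μ := μ) (μstar := μstar) hrefl s n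
  have htail := optRegret_le_pathRegret_of_le hrefl hmax hgap (hB (q 1))
    (Nat.le_sub_one_of_lt hGn) (p := fun t => q (t + 1)) rfl fun t ht => hq (t + 1) (by omega)
  have hsplit : pathRegret μ μstar q (n + 1)
      = μstar - μ (q 0) + pathRegret μ μstar (fun t => q (t + 1)) n := by
    rw [pathRegret, pathRegret, sum_range_succ']
    ring
  rw [Nat.sub_add_cancel (by omega)] at htail
  refine ⟨q 1, hq0 ▸ hq 0 (by omega), ?_⟩
  rw [← hqr, hsplit, hq0]
  linarith

lemma add_optRegret_le_of_forall_vopt_le [Finite S] (hrefl : ∀ s, adj s s)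
    (hmax : ∀ s, μ s ≤ μstar) {Δ : ℝ} (hgap : ∀ s, μ s < μstar → μ s ≤ μstar - Δ)
    {G n : ℕ} (hB : ∀ w, optRegret adj μ μstar w n < (G + 1) * Δ) (hGn : G < n) {s w' : S}
    (hw' : ∀ w, adj s w → Vopt adj μ w n ≤ Vopt adj μ w' n) :
    μstar - μ s + optRegret adj μ μstar w' n ≤ optRegret adj μ μstar s n := by
  obtain ⟨w, hw, hle⟩ := exists_adj_add_optRegret_le hrefl hmax hgap hB hGn s
  have : optRegret adj μ μstar w' n ≤ optRegret adj μ μstar w n := by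
    rw [optRegret, optRegret]
    linarith [hw' w hw]
  linarith

lemma pathRegret_le_optRegret_of_forall_add_le [Finite S] (hrefl : ∀ s, adj s s)
    (hmax : ∀ s, μ s ≤ μstar) {p : ℕ → S} {T n : ℕ}
    (hstep : ∀ t < T, μstar - μ (p t) + optRegret adj μ μstar (p (t + 1)) n
      ≤ optRegret adj μ μstar (p t) n) :
    pathRegret μ μstar p (T + 1) ≤ optRegret adj μ μstar (p 0) n := by
  have hlast := sub_le_optRegret hrefl hmax (p T) n
  have := sum_range_add_le_of_forall_add_le
    (a := fun t => μstar - μ (p t)) (b := fun t => optRegret adj μ μstar (p t) n) hstep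
  rw [pathRegret, sum_range_succ]
  linarith

end Regret

theorem greedy_policy_optimal_general {S : Type*} [Fintype S]
    (adj : S → S → Prop) (hrefl : ∀ s, adj s s)
    (μ : S → ℝ) (hμ0 : ∀ s, 0 ≤ μ s)
    (μstar : ℝ) (hmax : ∀ s, μ s ≤ μstar) (hex : ∃ s, μ s = μstar)
    (Δ : ℝ) (hΔ : 0 < Δ) (hgap : ∀ s, μ s < μstar → μ s ≤ μstar - Δ)
    (D : ℕ)
    (hD : ∀ s s' : S, ∃ (T : ℕ) (p : ℕ → S),
      T ≤ D ∧ p 0 = s ∧ p T = s' ∧ Adm adj p T)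
    (T : ℕ) (hT : TG D μstar Δ + Fintype.card S ≤ T)
    (s0 : S) (p : ℕ → S) (hp0 : p 0 = s0)
    (hgreedy : ∀ t < T, adj (p t) (p (t + 1)) ∧
      ∀ w, adj (p t) w →
        Vopt adj μ w (TG D μstar Δ + Fintype.card S) ≤
          Vopt adj μ (p (t + 1)) (TG D μstar Δ + Fintype.card S)) :
    Vpath μ p T = Vopt adj μ s0 T := by
  set G := TG D μstar Δ
  set H := G + Fintype.card S
  have hB : ∀ s n, optRegret adj μ μstar s n < (G + 1) * Δ :=
    optRegret_lt_TG_succ_mul hrefl hμ0 hex hΔ hD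
  have hGH : G < H := Nat.lt_add_of_pos_right (Fintype.card_pos_iff.2 ⟨s0⟩)
  have hgreedy_regret : pathRegret μ μstar p (T + 1) ≤ optRegret adj μ μstar s0 H :=
    hp0 ▸ pathRegret_le_optRegret_of_forall_add_le hrefl hmax fun t ht =>
      add_optRegret_le_of_forall_vopt_le hrefl hmax hgap (fun w => hB w H) hGH (hgreedy t ht).2
  obtain ⟨q, hq0, hq, hqv⟩ := exists_vpath_eq_vopt (μ := μ) hrefl s0 T
  have hopt_regret := optRegret_le_pathRegret_of_le hrefl hmax hgap (hB s0 H) (by omega) hq0 hq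
  refine le_antisymm (le_vopt hp0 fun t ht => (hgreedy t ht).1) ?_
  rw [← hqv, vpath_eq_sub_pathRegret μ μstar p, vpath_eq_sub_pathRegret μ μstar q]
  linarith

/-- Greedy stationary policy optimality: for `T ≥ T_G + |S|`, every path which
at each step moves to a neighbor maximizing `V(·, T_G + |S|)` achieves the
optimal value `V(s0, T)`. -/
theorem greedy_policy_optimal {S : Type*} [Fintype S] [Nonempty S]
    (adj : S → S → Prop) (hrefl : ∀ s, adj s s) (hsymm : ∀ s t, adj s t → adj t s)
    (μ : S → ℝ) (hμ0 : ∀ s, 0 ≤ μ s)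
    (μstar : ℝ) (hmax : ∀ s, μ s ≤ μstar) (hex : ∃ s, μ s = μstar)
    (Δ : ℝ) (hΔ : 0 < Δ) (hgap : ∀ s, μ s < μstar → μ s ≤ μstar - Δ)
    (D : ℕ)
    (hD : ∀ s s' : S, ∃ (T : ℕ) (p : ℕ → S),
      T ≤ D ∧ p 0 = s ∧ p T = s' ∧ Adm adj p T)
    (T : ℕ) (hT : TG D μstar Δ + Fintype.card S ≤ T)
    (s0 : S) (p : ℕ → S) (hp0 : p 0 = s0)
    (hgreedy : ∀ t < T, adj (p t) (p (t + 1)) ∧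
      ∀ w, adj (p t) w →
        Vopt adj μ w (TG D μstar Δ + Fintype.card S) ≤
          Vopt adj μ (p (t + 1)) (TG D μstar Δ + Fintype.card S)) :
    Vpath μ p T = Vopt adj μ s0 T :=
  greedy_policy_optimal_general adj hrefl μ hμ0 μstar hmax hex Δ hΔ hgap D hD T hT s0 p hp0 hgreedy
end
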